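/- arXiv:2105.11287 — 5 statements merged into one kernel-verified Lean document; each statement's English description precedes it below -/
import Mathlib

section
/- Let F : [0, T] → ℝ be a continuous non-negative function, let κ > 1 and let c₁, c₂ > 0 be constants such that F(t) ≤ c₁ + c₂ F(t)^κ for all t ∈ [0, T] and F(0) ≤ c₁. If moreover c₁ · c₂^{1/(κ−1)} < (1 − 1/κ) · κ^{−1/(κ−1)}, then F(t) < c₁/(1 − 1/κ) for all t ∈ [0, T]. -/
/-- Bootstrap (continuity) lemma (Strauss): if a continuous non-negative function `F` on
`[0, T]` satisfies `F t ≤ c₁ + c₂ * F t ^ κ` with `κ > 1`, `F 0 ≤ c₁`, and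
`c₁ * c₂ ^ (1/(κ-1)) < (1 - 1/κ) * κ ^ (-(1/(κ-1)))`, then `F t < c₁ / (1 - 1/κ)` on `[0, T]`. -/
theorem strauss_bootstrap (T : ℝ) (hT : 0 ≤ T) (F : ℝ → ℝ)
    (hFcont : ContinuousOn F (Set.Icc 0 T))
    (hFnonneg : ∀ t ∈ Set.Icc (0 : ℝ) T, 0 ≤ F t)
    (κ c₁ c₂ : ℝ) (hκ : 1 < κ) (hc₁ : 0 < c₁) (hc₂ : 0 < c₂)
    (hF : ∀ t ∈ Set.Icc (0 : ℝ) T, F t ≤ c₁ + c₂ * F t ^ κ)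
    (hF0 : F 0 ≤ c₁)
    (hsmall : c₁ * c₂ ^ (1 / (κ - 1)) < (1 - 1 / κ) * κ ^ (-(1 / (κ - 1)))) :
    ∀ t ∈ Set.Icc (0 : ℝ) T, F t < c₁ / (1 - 1 / κ) := by
  have hκ0 : (0:ℝ) < κ := lt_trans one_pos hκ
  have hκ1 : (0:ℝ) < κ - 1 := by linarith
  have hfrac : 0 < 1 - 1/κ := by
    have : 1/κ < 1 := by rw [div_lt_one hκ0]; linarith
    linarith
  set ε := 1/(κ-1) with hε
  set x : ℝ := (κ*c₂) ^ (-ε) with hx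
  have hκc₂ : 0 < κ*c₂ := mul_pos hκ0 hc₂
  have hxpos : 0 < x := Real.rpow_pos_of_pos hκc₂ _
  have hεκ : -ε * (κ-1) = -1 := by rw [hε]; field_simp
  have hxpow : x ^ (κ-1) = (κ*c₂)⁻¹ := by
    rw [hx, ← Real.rpow_mul hκc₂.le, hεκ, Real.rpow_neg_one]
  have hkey : c₂ * x ^ (κ-1) = 1/κ := by
    rw [hxpow]; field_simp
  have hcc : c₂ ^ ε * c₂ ^ (-ε) = 1 := by
    rw [← Real.rpow_add hc₂]; simp
  have hxsplit : x = κ ^ (-ε) * c₂ ^ (-ε) := by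
    rw [hx, Real.mul_rpow hκ0.le hc₂.le]
  have h3 : c₁ < (1 - 1/κ) * x := by
    have h := mul_lt_mul_of_pos_right hsmall (Real.rpow_pos_of_pos hc₂ (-ε))
    calc c₁ = c₁ * c₂ ^ ε * c₂ ^ (-ε) := by rw [mul_assoc, hcc, mul_one]
      _ < (1 - 1/κ) * κ ^ (-ε) * c₂ ^ (-ε) := h
      _ = (1 - 1/κ) * x := by rw [hxsplit]; ring
  have hκeq : (κ-1)+1 = κ := by ring
  have hne : ∀ t ∈ Set.Icc (0:ℝ) T, F t ≠ x := by
    intro t ht heq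
    have h1 := hF t ht
    rw [heq] at h1
    have hxk : x ^ κ = x ^ (κ-1) * x := by
      have h := Real.rpow_add_one hxpos.ne' (κ-1)
      rw [hκeq] at h; exact h
    have hcx : c₂ * x ^ κ = (1/κ) * x := by rw [hxk, ← mul_assoc, hkey]
    rw [hcx] at h1
    nlinarith
  have hlt : ∀ t ∈ Set.Icc (0:ℝ) T, F t < x := by
    intro t ht
    by_contra hcon
    push_neg at hcon
    have hF0x : F 0 ≤ x := by nlinarith [hxpos, mul_pos (show (0:ℝ) < 1/κ by positivity) hxpos]
    have hsub : Set.Icc (0:ℝ) t ⊆ Set.Icc 0 T := Set.Icc_subset_Icc le_rfl ht.2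
    have hiv := intermediate_value_Icc ht.1 (hFcont.mono hsub)
    obtain ⟨s, hs, hFs⟩ := hiv ⟨hF0x, hcon⟩
    exact hne s (hsub hs) hFs
  intro t ht
  rcases eq_or_lt_of_le (hFnonneg t ht) with h0 | h0
  · rw [← h0]; exact div_pos hc₁ hfrac
  · have hpow : F t ^ (κ-1) < x ^ (κ-1) :=
      Real.rpow_lt_rpow (hFnonneg t ht) (hlt t ht) hκ1
    have hFk : F t ^ κ = F t ^ (κ-1) * F t := by
      have h := Real.rpow_add_one h0.ne' (κ-1)
      rw [hκeq] at h; exact h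
    have hbound : c₂ * F t ^ κ < (1/κ) * F t := by
      rw [hFk, ← mul_assoc]
      have h4 : c₂ * F t ^ (κ-1) < 1/κ := by
        calc c₂ * F t ^ (κ-1) < c₂ * x ^ (κ-1) := by nlinarith
          _ = 1/κ := hkey
      nlinarith
    have h1 := hF t ht
    rw [lt_div_iff₀ hfrac]
    nlinarith
end

section
/- Let β > 0 and γ > 0 be real constants. Then there exists a constant C > 0, depending only on β and γ, such that for every t ≥ 0 one has ∫₀ᵗ (1 + σ)^{−β} e^{−γ(t−σ)} dσ ≤ C (1 + t)^{−β}. -/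
open MeasureTheory

lemma exp_aux_integral (γ t a b : ℝ) (hγ : 0 < γ) :
    ∫ σ in a..b, Real.exp (-γ * (t - σ)) =
      (Real.exp (-γ * (t - b)) - Real.exp (-γ * (t - a))) / γ := by
  have hderiv : ∀ σ ∈ Set.uIcc a b,
      HasDerivAt (fun σ => Real.exp (-γ * (t - σ)) / γ) (Real.exp (-γ * (t - σ))) σ := by
    intro σ _
    have h1 : HasDerivAt (fun σ : ℝ => -γ * (t - σ)) γ σ := by
      have := ((hasDerivAt_id σ).const_sub t).const_mul (-γ)
      simpa using this
    have h2 := (h1.exp).div_const γ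
    simpa [mul_div_assoc, mul_div_cancel_right₀ _ hγ.ne'] using h2
  have hint : IntervalIntegrable (fun σ => Real.exp (-γ * (t - σ))) volume a b := by
    apply Continuous.intervalIntegrable
    continuity
  have := intervalIntegral.integral_eq_sub_of_hasDerivAt hderiv hint
  rw [this]
  ring

lemma exp_aux_pow_le (γ : ℝ) (hγ : 0 < γ) (n : ℕ) (t : ℝ) (ht : 0 ≤ t) :
    (1 + t) ^ n ≤ n.factorial * (2 / γ) ^ n * Real.exp (γ / 2) * Real.exp (γ * t / 2) := by
  have hx : (0:ℝ) ≤ γ * (1 + t) / 2 := by positivity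
  have key : (γ * (1 + t) / 2) ^ n / n.factorial ≤ Real.exp (γ * (1 + t) / 2) := by
    calc (γ * (1 + t) / 2) ^ n / n.factorial
        ≤ ∑ i ∈ Finset.range (n + 1), (γ * (1 + t) / 2) ^ i / i.factorial :=
          Finset.single_le_sum (f := fun i => (γ * (1 + t) / 2) ^ i / (i.factorial : ℝ))
            (fun i _ => by positivity) (Finset.self_mem_range_succ n)
      _ ≤ Real.exp (γ * (1 + t) / 2) := Real.sum_le_exp_of_nonneg hx _
  have h2 : (γ * (1 + t) / 2) ^ n = (γ / 2) ^ n * (1 + t) ^ n := by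
    rw [show γ * (1 + t) / 2 = (γ / 2) * (1 + t) by ring, mul_pow]
  have h3 : Real.exp (γ * (1 + t) / 2) = Real.exp (γ / 2) * Real.exp (γ * t / 2) := by
    rw [← Real.exp_add]; ring_nf
  have hfac : (0:ℝ) < n.factorial := by exact_mod_cast n.factorial_pos
  have := (div_le_iff₀ hfac).mp key
  rw [h2, h3] at this
  have hγn : (0:ℝ) < (γ / 2) ^ n := by positivity
  calc (1 + t) ^ n = ((γ / 2) ^ n * (1 + t) ^ n) / (γ / 2) ^ n := by
        field_simp
    _ ≤ (Real.exp (γ / 2) * Real.exp (γ * t / 2) * n.factorial) / (γ / 2) ^ n := by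
        exact div_le_div_of_nonneg_right this hγn.le
    _ = n.factorial * (2 / γ) ^ n * Real.exp (γ / 2) * Real.exp (γ * t / 2) := by
        rw [div_pow, div_pow]
        field_simp

/-- Exponential convolution inequality: if `β, γ > 0`, then
`∫₀ᵗ (1+σ)^(-β) e^{-γ(t-σ)} dσ ≤ C (1+t)^(-β)` for all `t ≥ 0`. -/
theorem exp_convolution_inequality (β γ : ℝ) (hβ : 0 < β) (hγ : 0 < γ) :
    ∃ C > (0 : ℝ), ∀ t ≥ (0 : ℝ),
      ∫ σ in Set.Icc (0 : ℝ) t, (1 + σ) ^ (-β) * Real.exp (-γ * (t - σ)) ≤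
        C * (1 + t) ^ (-β) := by
  set n : ℕ := ⌈β⌉₊
  set K : ℝ := n.factorial * (2 / γ) ^ n * Real.exp (γ / 2) with hK
  have hKpos : 0 < K := by
    have : (0:ℝ) < n.factorial := by exact_mod_cast n.factorial_pos
    positivity
  refine ⟨K / γ + 2 ^ β / γ, by positivity, ?_⟩
  intro t ht
  -- continuity / integrability
  have hcont : ContinuousOn (fun σ : ℝ => (1 + σ) ^ (-β) * Real.exp (-γ * (t - σ)))
      (Set.Icc 0 t) := by
    apply ContinuousOn.mul
    · apply ContinuousOn.rpow_const (by fun_prop)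
      intro x hx
      left
      have : (0:ℝ) ≤ x := hx.1
      nlinarith
    · fun_prop
  have hIcc : Set.uIcc (0:ℝ) t = Set.Icc 0 t := Set.uIcc_of_le ht
  have hint : IntervalIntegrable (fun σ : ℝ => (1 + σ) ^ (-β) * Real.exp (-γ * (t - σ)))
      volume 0 t := (hcont.mono (by rw [hIcc])).intervalIntegrable
  have hint1 : IntervalIntegrable (fun σ : ℝ => (1 + σ) ^ (-β) * Real.exp (-γ * (t - σ)))
      volume 0 (t/2) := by
        apply (hcont.mono _).intervalIntegrable
        rw [Set.uIcc_of_le (by linarith : (0:ℝ) ≤ t/2)]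
        exact Set.Icc_subset_Icc le_rfl (by linarith)
  have hint2 : IntervalIntegrable (fun σ : ℝ => (1 + σ) ^ (-β) * Real.exp (-γ * (t - σ)))
      volume (t/2) t := by
        apply (hcont.mono _).intervalIntegrable
        rw [Set.uIcc_of_le (by linarith : t/2 ≤ t)]
        exact Set.Icc_subset_Icc (by linarith) le_rfl
  have hexpint : ∀ a b : ℝ, IntervalIntegrable (fun σ => Real.exp (-γ * (t - σ))) volume a b := by
    intro a b; apply Continuous.intervalIntegrable; continuity
  have hexpint2 : ∀ a b : ℝ, IntervalIntegrable
      (fun σ : ℝ => (1 + t/2) ^ (-β) * Real.exp (-γ * (t - σ))) volume a b := by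
    intro a b; exact (hexpint a b).const_mul _
  -- rewrite set integral as interval integral
  rw [MeasureTheory.integral_Icc_eq_integral_Ioc, ← intervalIntegral.integral_of_le ht]
  rw [← intervalIntegral.integral_add_adjacent_intervals hint1 hint2]
  -- bound first piece
  have hbound1 : ∫ σ in (0:ℝ)..(t/2), (1 + σ) ^ (-β) * Real.exp (-γ * (t - σ)) ≤
      Real.exp (-(γ * t / 2)) / γ := by
    have h1 : ∫ σ in (0:ℝ)..(t/2), (1 + σ) ^ (-β) * Real.exp (-γ * (t - σ)) ≤
        ∫ σ in (0:ℝ)..(t/2), Real.exp (-γ * (t - σ)) := by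
      apply intervalIntegral.integral_mono_on (by linarith) hint1 (hexpint 0 (t/2))
      intro σ hσ
      have h1σ : (1:ℝ) ≤ 1 + σ := by linarith [hσ.1]
      have : (1 + σ) ^ (-β) ≤ 1 :=
        Real.rpow_le_one_of_one_le_of_nonpos h1σ (by linarith)
      have he : 0 ≤ Real.exp (-γ * (t - σ)) := Real.exp_nonneg _
      nlinarith
    rw [exp_aux_integral γ t 0 (t/2) hγ] at h1
    refine h1.trans ?_
    apply div_le_div_of_nonneg_right _ hγ.le
    have : 0 < Real.exp (-γ * (t - 0)) := Real.exp_pos _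
    have heq : -γ * (t - t/2) = -(γ * t / 2) := by ring
    rw [heq]
    linarith
  -- bound second piece
  have hbound2 : ∫ σ in (t/2)..t, (1 + σ) ^ (-β) * Real.exp (-γ * (t - σ)) ≤
      (1 + t/2) ^ (-β) / γ := by
    have h1 : ∫ σ in (t/2)..t, (1 + σ) ^ (-β) * Real.exp (-γ * (t - σ)) ≤
        ∫ σ in (t/2)..t, (1 + t/2) ^ (-β) * Real.exp (-γ * (t - σ)) := by
      apply intervalIntegral.integral_mono_on (by linarith) hint2 (hexpint2 _ _)
      intro σ hσ
      have h1σ : (0:ℝ) < 1 + t/2 := by linarith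
      have : (1 + σ) ^ (-β) ≤ (1 + t/2) ^ (-β) :=
        Real.rpow_le_rpow_of_nonpos h1σ (by linarith [hσ.1]) (by linarith)
      have he : 0 ≤ Real.exp (-γ * (t - σ)) := Real.exp_nonneg _
      exact mul_le_mul_of_nonneg_right this he
    rw [intervalIntegral.integral_const_mul, exp_aux_integral γ t (t/2) t hγ] at h1
    refine h1.trans ?_
    rw [div_eq_mul_inv]
    apply mul_le_mul_of_nonneg_left _ (Real.rpow_nonneg (by linarith) _)
    rw [show γ⁻¹ = 1/γ from (one_div γ).symm]
    apply div_le_div_of_nonneg_right _ hγ.le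
    have h3 : -γ * (t - t) = 0 := by ring
    rw [h3, Real.exp_zero]
    linarith [Real.exp_pos (-γ * (t - t * 2⁻¹)), Real.exp_pos (-γ * (t - t/2))]
  -- key decay estimates
  have h1t : (0:ℝ) < 1 + t := by linarith
  have hrpow_pos : (0:ℝ) < (1 + t) ^ (-β) := Real.rpow_pos_of_pos h1t _
  have hA : Real.exp (-(γ * t / 2)) ≤ K * (1 + t) ^ (-β) := by
    have hβn : β ≤ (n : ℝ) := Nat.le_ceil β
    have h1 : (1 + t) ^ β ≤ (1 + t) ^ (n : ℝ) :=
      Real.rpow_le_rpow_of_exponent_le (by linarith) hβn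
    have h2 : (1 + t) ^ (n : ℝ) = (1 + t) ^ n := by
      rw [Real.rpow_natCast]
    have h3 : (1 + t) ^ β ≤ K * Real.exp (γ * t / 2) := by
      rw [hK]
      calc (1 + t) ^ β ≤ ((1 + t) : ℝ) ^ n := by rw [← h2]; exact h1
        _ ≤ n.factorial * (2 / γ) ^ n * Real.exp (γ / 2) * Real.exp (γ * t / 2) :=
            exp_aux_pow_le γ hγ n t ht
    -- exp(-(γt/2)) * (1+t)^β ≤ K
    have hβpos : (0:ℝ) < (1 + t) ^ β := Real.rpow_pos_of_pos h1t _
    have hinv : (1 + t) ^ (-β) = ((1 + t) ^ β)⁻¹ := by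
      rw [Real.rpow_neg (by linarith)]
    rw [hinv, ← div_eq_mul_inv, le_div_iff₀ hβpos]
    have hepos : (0:ℝ) < Real.exp (γ * t / 2) := Real.exp_pos _
    have := mul_le_mul_of_nonneg_left h3 (le_of_lt (Real.exp_pos (-(γ * t / 2))))
    calc Real.exp (-(γ * t / 2)) * (1 + t) ^ β
        ≤ Real.exp (-(γ * t / 2)) * (K * Real.exp (γ * t / 2)) := this
      _ = K * (Real.exp (-(γ * t / 2)) * Real.exp (γ * t / 2)) := by ring
      _ = K := by rw [← Real.exp_add]; simp
  have hB : (1 + t/2) ^ (-β) ≤ 2 ^ β * (1 + t) ^ (-β) := by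
    have h1 : (0:ℝ) < (1 + t) / 2 := by linarith
    have h2 : (1 + t) / 2 ≤ 1 + t/2 := by linarith
    have h3 : (1 + t/2) ^ (-β) ≤ ((1 + t) / 2) ^ (-β) :=
      Real.rpow_le_rpow_of_nonpos h1 h2 (by linarith)
    refine h3.trans_eq ?_
    rw [Real.div_rpow (by linarith) (by norm_num), Real.rpow_neg (by norm_num : (0:ℝ) ≤ 2)]
    field_simp
  calc (∫ σ in (0:ℝ)..(t/2), (1 + σ) ^ (-β) * Real.exp (-γ * (t - σ))) +
        ∫ σ in (t/2)..t, (1 + σ) ^ (-β) * Real.exp (-γ * (t - σ))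
      ≤ Real.exp (-(γ * t / 2)) / γ + (1 + t/2) ^ (-β) / γ := add_le_add hbound1 hbound2
    _ ≤ (K * (1 + t) ^ (-β)) / γ + (2 ^ β * (1 + t) ^ (-β)) / γ := by
        exact add_le_add (div_le_div_of_nonneg_right hA hγ.le)
          (div_le_div_of_nonneg_right hB hγ.le)
    _ = (K / γ + 2 ^ β / γ) * (1 + t) ^ (-β) := by ring
end

section
/- Fix constants τ, β with 0 < τ < β. There exist constants c₁, c₂, η > 0 (depending only on τ and β) and a function 𝓛 : ℝ³ × ℂ³ → ℝ with the following properties: (a) for every ξ ∈ ℝ³ and every state (a, b, c) ∈ ℂ³, c₁ E₁(ξ; a, b, c) ≤ 𝓛(ξ, (a, b, c)) ≤ c₂ E₁(ξ; a, b, c), where E₁(ξ; a, b, c) = ½(|b + τc|² + τ(β − τ)|ξ|²|b|² + |ξ|²|a + τb|²); (b) for every ξ ∈ ℝ³ and every differentiable solution (û, v̂, ŵ) : [0, ∞) → ℂ³ of the Fourier-mode linearized JMGT system, the function t ↦ 𝓛(ξ, (û(t), v̂(t), ŵ(t))) is differentiable and satisfies d/dt 𝓛(ξ, (û(t), v̂(t),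 ŵ(t))) + η · (|ξ|²/(1 + |ξ|²)) · 𝓛(ξ, (û(t), v̂(t), ŵ(t))) ≤ 0 for all t ≥ 0. -/
/-!
Put `p = û + τ v̂`, `b = v̂`, `q = v̂ + τ ŵ`, `k = |ξ|²` and `δ = β - τ`. The system becomes
`p' = q`, `τ b' = q - b`, `q' = -k p - δ k b`, and the energy `E = ½(|q|² + τδk|b|² + k|p|²)`
satisfies `E' = -δk|b|²`, which only dissipates `b`. The corrector `F = ⟪p, q⟫ - 2τ⟪b, q⟫`
(real inner products, `Re (z * conj w)` on `ℂ`) has `F' = -|q|² - k|p|²` up to terms controlled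
by `|b|`, so for small `ε` the functional `L = E + ε k/(1+k) F` satisfies `L' ≤ -ε k/(1+k) E`.
Since `(k/(1+k))² ≤ k/4`, the corrector term is at most `E/2` in absolute value; hence `L` is
equivalent to `E` and `L' + (2ε/3) k/(1+k) L ≤ 0`.
-/

open RealInnerProductSpace

namespace JMGT

variable {E : Type*} [NormedAddCommGroup E] [InnerProductSpace ℝ E]

noncomputable def energy (τ δ k : ℝ) (p b q : E) : ℝ :=
  1 / 2 * (‖q‖ ^ 2 + τ * δ * k * ‖b‖ ^ 2 + k * ‖p‖ ^ 2)

noncomputable def corrector (τ : ℝ) (p b q : E) : ℝ :=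
  ⟪p, q⟫ - 2 * τ * ⟪b, q⟫

noncomputable def lyapunov (τ δ ε k : ℝ) (p b q : E) : ℝ :=
  energy τ δ k p b q + ε * (k / (1 + k)) * corrector τ p b q

noncomputable def correctorDeriv (τ δ k : ℝ) (p b q : E) : ℝ :=
  -‖q‖ ^ 2 - k * ‖p‖ ^ 2 + (2 * τ - δ) * k * ⟪p, b⟫ + 2 * ⟪b, q⟫ + 2 * τ * δ * k * ‖b‖ ^ 2

noncomputable def lyapunovDeriv (τ δ ε k : ℝ) (p b q : E) : ℝ :=
  -(δ * k * ‖b‖ ^ 2) + ε * (k / (1 + k)) * correctorDeriv τ δ k p b q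

lemma four_mul_sq_div_one_add_le {k : ℝ} (hk : 0 ≤ k) : 4 * (k / (1 + k)) ^ 2 ≤ k := by
  rw [div_pow, mul_div_assoc', div_le_iff₀ (by positivity)]
  nlinarith [mul_nonneg hk (sq_nonneg (1 - k))]

lemma div_one_add_mul_abs_corrector_le {τ k : ℝ} (hτ : 0 ≤ τ) (hk : 0 ≤ k) (p b q : E) :
    k / (1 + k) * |corrector τ p b q| ≤
      ((1 + 2 * τ) * ‖q‖ ^ 2 + 2 * τ * k * ‖b‖ ^ 2 + k * ‖p‖ ^ 2) / 4 := by
  set ρ := k / (1 + k)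
  have hρ : 0 ≤ ρ := by positivity
  have hρk : 4 * ρ ^ 2 ≤ k := four_mul_sq_div_one_add_le hk
  have hF : |corrector τ p b q| ≤ ‖p‖ * ‖q‖ + 2 * τ * (‖b‖ * ‖q‖) := by
    unfold corrector
    refine (abs_sub _ _).trans (add_le_add (abs_real_inner_le_norm p q) ?_)
    rw [abs_mul, abs_of_nonneg (by positivity)]
    gcongr
    exact abs_real_inner_le_norm b q
  have hpq : ρ * (‖p‖ * ‖q‖) ≤ (‖q‖ ^ 2 + k * ‖p‖ ^ 2) / 4 := by
    nlinarith [sq_nonneg (2 * ρ * ‖p‖ - ‖q‖), mul_le_mul_of_nonneg_right hρk (sq_nonneg ‖p‖)]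
  have hbq : ρ * (‖b‖ * ‖q‖) ≤ (‖q‖ ^ 2 + k * ‖b‖ ^ 2) / 4 := by
    nlinarith [sq_nonneg (2 * ρ * ‖b‖ - ‖q‖), mul_le_mul_of_nonneg_right hρk (sq_nonneg ‖b‖)]
  calc ρ * |corrector τ p b q| ≤ ρ * (‖p‖ * ‖q‖) + 2 * τ * (ρ * (‖b‖ * ‖q‖)) := by
        nlinarith [mul_le_mul_of_nonneg_left hF hρ]
    _ ≤ _ := by nlinarith [mul_le_mul_of_nonneg_left hbq hτ]

lemma abs_lyapunov_sub_energy_le {τ δ ε k : ℝ} (hτ : 0 ≤ τ) (hk : 0 ≤ k) (hε : 0 ≤ ε)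
    (hετ : ε * (1 + 2 * τ) ≤ 1) (hεδ : 2 * ε ≤ δ) (p b q : E) :
    |lyapunov τ δ ε k p b q - energy τ δ k p b q| ≤ energy τ δ k p b q / 2 := by
  have h := mul_le_mul_of_nonneg_left (div_one_add_mul_abs_corrector_le hτ hk p b q) hε
  rw [lyapunov, add_sub_cancel_left, abs_mul, abs_mul, abs_of_nonneg hε,
    abs_of_nonneg (by positivity : 0 ≤ k / (1 + k)), mul_assoc]
  unfold energy
  have hq := mul_le_mul_of_nonneg_right hετ (sq_nonneg ‖q‖)
  have hb := mul_le_mul_of_nonneg_right hεδ (by positivity : 0 ≤ τ * k * ‖b‖ ^ 2)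
  have hp := mul_le_mul_of_nonneg_right (by nlinarith : ε ≤ 1) (by positivity : 0 ≤ k * ‖p‖ ^ 2)
  linarith

lemma correctorDeriv_le {τ δ k : ℝ} (hk : 0 ≤ k) (p b q : E) :
    correctorDeriv τ δ k p b q ≤
      -(‖q‖ ^ 2 + k * ‖p‖ ^ 2) / 2 + (((2 * τ - δ) ^ 2 / 2 + 2 * τ * δ) * k + 2) * ‖b‖ ^ 2 := by
  have hpb := norm_sub_sq_real p ((2 * τ - δ) • b)
  have hqb := norm_sub_sq_real q ((2 : ℝ) • b)
  simp only [real_inner_smul_right, norm_smul, mul_pow, Real.norm_eq_abs, sq_abs] at hpb hqb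
  have hpb' := mul_nonneg hk (sq_nonneg ‖p - (2 * τ - δ) • b‖)
  have hqb' := sq_nonneg ‖q - (2 : ℝ) • b‖
  rw [real_inner_comm b q] at hqb
  unfold correctorDeriv
  nlinarith

lemma lyapunovDeriv_le {τ δ ε k : ℝ} (hτ : 0 ≤ τ) (hδ : 0 ≤ δ) (hk : 0 ≤ k) (hε : 0 ≤ ε)
    (hεδ : ε * ((2 * τ + δ) ^ 2 + 4) ≤ 2 * δ) (p b q : E) :
    lyapunovDeriv τ δ ε k p b q ≤ -(ε * (k / (1 + k)) * energy τ δ k p b q) := by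
  unfold lyapunovDeriv energy
  set ρ := k / (1 + k)
  set C := (2 * τ - δ) ^ 2 / 2 + 2 * τ * δ with hC
  have hρ : 0 ≤ ρ := by positivity
  have hρ1 : ρ ≤ 1 := div_le_one_of_le₀ (by linarith) (by linarith)
  have hρk : ρ ≤ k := div_le_self hk (by linarith)
  have hB : 0 ≤ k * ‖b‖ ^ 2 := by positivity
  have hF := mul_le_mul_of_nonneg_left (correctorDeriv_le (τ := τ) (δ := δ) hk p b q)
    (mul_nonneg hε hρ)
  rw [← hC] at hF
  have hρB : ρ * ((C * k + 2) * ‖b‖ ^ 2) ≤ (C + 2) * (k * ‖b‖ ^ 2) := by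
    have hC0 : 0 ≤ C := by positivity
    nlinarith [mul_le_mul_of_nonneg_right hρ1 (mul_nonneg hC0 hB),
      mul_le_mul_of_nonneg_right hρk (sq_nonneg ‖b‖)]
  have hcoef : ε * (C + 2 + τ * δ / 2) ≤ δ := by
    rw [hC]
    nlinarith [mul_nonneg hε (mul_nonneg hτ hδ)]
  have hE : ρ * (τ * δ * k * ‖b‖ ^ 2) ≤ τ * δ * (k * ‖b‖ ^ 2) := by
    nlinarith [mul_le_mul_of_nonneg_right hρ1 (mul_nonneg (mul_nonneg hτ hδ) hB)]
  have h1 := mul_le_mul_of_nonneg_left hρB hε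
  have h2 := mul_le_mul_of_nonneg_left hE hε
  have h3 := mul_le_mul_of_nonneg_right hcoef hB
  linarith

section Dynamics

variable {τ δ k : ℝ} {p b q : ℝ → E} {c : E} {t : ℝ}

lemma hasDerivAt_energy (hp : HasDerivAt p (q t) t) (hb : HasDerivAt b c t)
    (hq : HasDerivAt q (-(k • p t) - (δ * k) • b t) t) (hc : τ • c = q t - b t) :
    HasDerivAt (fun s => energy τ δ k (p s) (b s) (q s)) (-(δ * k * ‖b t‖ ^ 2)) t := by
  have h := ((hq.norm_sq.add (hb.norm_sq.const_mul (τ * δ * k))).add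
    (hp.norm_sq.const_mul k)).const_mul (1 / 2 : ℝ)
  refine h.congr_deriv ?_
  have hτc : τ * ⟪b t, c⟫ = ⟪b t, q t⟫ - ‖b t‖ ^ 2 := by
    rw [← real_inner_smul_right, hc, inner_sub_right, real_inner_self_eq_norm_sq]
  simp only [inner_sub_right, inner_neg_right, real_inner_smul_right,
    real_inner_comm (p t) (q t), real_inner_comm (b t) (q t)]
  linear_combination (δ * k) * hτc

lemma hasDerivAt_corrector (hp : HasDerivAt p (q t) t) (hb : HasDerivAt b c t)
    (hq : HasDerivAt q (-(k • p t) - (δ * k) • b t) t) (hc : τ • c = q t - b t) :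
    HasDerivAt (fun s => corrector τ (p s) (b s) (q s))
      (correctorDeriv τ δ k (p t) (b t) (q t)) t := by
  have h := (hp.inner ℝ hq).sub ((hb.inner ℝ hq).const_mul (2 * τ))
  refine h.congr_deriv ?_
  have hτc : τ * ⟪c, q t⟫ = ‖q t‖ ^ 2 - ⟪b t, q t⟫ := by
    rw [← real_inner_smul_left, hc, inner_sub_left, real_inner_self_eq_norm_sq]
  simp only [correctorDeriv, inner_sub_right, inner_neg_right, real_inner_smul_right,
    real_inner_comm (p t) (b t), real_inner_self_eq_norm_sq]
  linear_combination (-2) * hτc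

lemma hasDerivAt_lyapunov (ε : ℝ) (hp : HasDerivAt p (q t) t) (hb : HasDerivAt b c t)
    (hq : HasDerivAt q (-(k • p t) - (δ * k) • b t) t) (hc : τ • c = q t - b t) :
    HasDerivAt (fun s => lyapunov τ δ ε k (p s) (b s) (q s))
      (lyapunovDeriv τ δ ε k (p t) (b t) (q t)) t :=
  (hasDerivAt_energy hp hb hq hc).add ((hasDerivAt_corrector hp hb hq hc).const_mul _)

end Dynamics

lemma lyapunovDeriv_add_le {τ δ ε k : ℝ} (hτ : 0 ≤ τ) (hδ : 0 ≤ δ) (hk : 0 ≤ k) (hε : 0 ≤ ε)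
    (hετ : ε * (1 + 2 * τ) ≤ 1) (hεδ : ε * ((2 * τ + δ) ^ 2 + 4) ≤ 2 * δ) (p b q : E) :
    lyapunovDeriv τ δ ε k p b q + 2 * ε / 3 * (k / (1 + k)) * lyapunov τ δ ε k p b q ≤ 0 := by
  have hL := (abs_sub_le_iff.mp (abs_lyapunov_sub_energy_le (δ := δ) hτ hk hε hετ
    (by nlinarith [sq_nonneg (2 * τ + δ)]) p b q)).1
  have hρL := mul_le_mul_of_nonneg_left hL (by positivity : 0 ≤ 2 * ε / 3 * (k / (1 + k)))
  linarith [lyapunovDeriv_le hτ hδ hk hε hεδ p b q]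

end JMGT

open JMGT

/-- Lyapunov functional for the Fourier-mode linearized JMGT system: there are constants
`c₁, c₂, η > 0` and a functional `L : ℝ³ × ℂ³ → ℝ` equivalent to the energy
`E₁(ξ; a, b, c) = ½(|b + τc|² + τ(β − τ)|ξ|²|b|² + |ξ|²|a + τb|²)` such that along every
differentiable solution of the system `û' = v̂`, `v̂' = ŵ`, `τŵ' = −|ξ|²û − β|ξ|²v̂ − ŵ`,
one has `d/dt L + η · |ξ|²/(1+|ξ|²) · L ≤ 0`. -/
theorem jmgt_lyapunov_functional (τ β : ℝ) (hτ : 0 < τ) (hτβ : τ < β) :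
    ∃ c₁ > (0 : ℝ), ∃ c₂ > (0 : ℝ), ∃ η > (0 : ℝ),
      ∃ L : EuclideanSpace ℝ (Fin 3) × (ℂ × ℂ × ℂ) → ℝ,
        (∀ (ξ : EuclideanSpace ℝ (Fin 3)) (a b c : ℂ),
            c₁ * ((1 / 2) * (‖b + (τ : ℂ) * c‖ ^ 2
                + τ * (β - τ) * ‖ξ‖ ^ 2 * ‖b‖ ^ 2
                + ‖ξ‖ ^ 2 * ‖a + (τ : ℂ) * b‖ ^ 2))
              ≤ L (ξ, (a, b, c)) ∧
            L (ξ, (a, b, c)) ≤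
              c₂ * ((1 / 2) * (‖b + (τ : ℂ) * c‖ ^ 2
                + τ * (β - τ) * ‖ξ‖ ^ 2 * ‖b‖ ^ 2
                + ‖ξ‖ ^ 2 * ‖a + (τ : ℂ) * b‖ ^ 2))) ∧
        (∀ (ξ : EuclideanSpace ℝ (Fin 3)) (u v w w' : ℝ → ℂ),
            (∀ t ≥ (0 : ℝ), HasDerivAt u (v t) t) →
            (∀ t ≥ (0 : ℝ), HasDerivAt v (w t) t) →
            (∀ t ≥ (0 : ℝ), HasDerivAt w (w' t) t) →
            (∀ t ≥ (0 : ℝ), (τ : ℂ) * w' t =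
              -((‖ξ‖ ^ 2 : ℝ) : ℂ) * u t - ((β * ‖ξ‖ ^ 2 : ℝ) : ℂ) * v t - w t) →
            ∃ g' : ℝ → ℝ, ∀ t ≥ (0 : ℝ),
              HasDerivAt (fun s => L (ξ, (u s, v s, w s))) (g' t) t ∧
              g' t + η * (‖ξ‖ ^ 2 / (1 + ‖ξ‖ ^ 2)) * L (ξ, (u t, v t, w t)) ≤ 0) := by
  set δ := β - τ with hδ_def
  have hδ : 0 < δ := sub_pos.mpr hτβ
  obtain ⟨ε, hε, hετ, hεδ⟩ :
      ∃ ε > (0 : ℝ), ε * (1 + 2 * τ) ≤ 1 ∧ ε * ((2 * τ + δ) ^ 2 + 4) ≤ 2 * δ :=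
    ⟨min (1 / (1 + 2 * τ)) (2 * δ / ((2 * τ + δ) ^ 2 + 4)), by positivity,
      (le_div_iff₀ (by positivity)).mp (min_le_left _ _),
      (le_div_iff₀ (by positivity)).mp (min_le_right _ _)⟩
  refine ⟨1 / 2, by norm_num, 3 / 2, by norm_num, 2 * ε / 3, by positivity,
    fun x => lyapunov τ δ ε (‖x.1‖ ^ 2) (x.2.1 + τ • x.2.2.1) x.2.2.1 (x.2.2.1 + τ • x.2.2.2),
    fun ξ a b c => ?_, fun ξ u v w w' hu hv hw hode => ?_⟩
  · have h := abs_sub_le_iff.mp <| abs_lyapunov_sub_energy_le (δ := δ) hτ.le (sq_nonneg ‖ξ‖)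
      hε.le hετ (by nlinarith [sq_nonneg (2 * τ + δ)]) (a + τ • b) b (b + τ • c)
    simp only [energy, Complex.real_smul] at h ⊢
    constructor <;> linarith
  · refine ⟨fun t => lyapunovDeriv τ δ ε (‖ξ‖ ^ 2) (u t + τ • v t) (v t) (v t + τ • w t),
      fun t ht => ⟨?_, lyapunovDeriv_add_le hτ.le hδ.le (sq_nonneg _) hε.le hετ hεδ _ _ _⟩⟩
    have hq : HasDerivAt (fun s => v s + τ • w s)
        (-(‖ξ‖ ^ 2 • (u t + τ • v t)) - (δ * ‖ξ‖ ^ 2) • v t) t := by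
      refine ((hv t ht).add ((hw t ht).const_smul τ)).congr_deriv ?_
      have h := hode t ht
      simp only [Complex.real_smul, hδ_def]
      push_cast at h ⊢
      linear_combination h
    have hp : HasDerivAt (fun s => u s + τ • v s) (v t + τ • w t) t :=
      (hu t ht).add ((hv t ht).const_smul τ)
    show HasDerivAt (fun s => lyapunov τ δ ε (‖ξ‖ ^ 2) (u s + τ • v s) (v s) (v s + τ • w s)) _ t
    exact hasDerivAt_lyapunov ε hp (hv t ht) hq (add_sub_cancel_left _ _).symm
end

section
/- Fix constants τ, β with 0 < τ < β. There exists a constant C > 0, depending only on τ and β, such that for every ξ ∈ ℝ³ and every differentiable solution (û, v̂, ŵ) : [0, ∞) → ℂ³ of the Fourier-mode linearized JMGT system, for all t ≥ 0: (τ/2) · d/dt |ŵ(t)|² + (1/2) |ŵ(t)|² ≤ C (|ξ|⁴ |û(t) + τv̂(t)|² + |ξ|⁴ |v̂(t)|²). -/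
/-!
Writing `K = |ξ|²`, the equation for `ŵ` reads `τ ŵ' = -K (û + τ v̂) - (β - τ) K v̂ - ŵ`, so
`ŵ` relaxes towards a forcing built from `û + τ v̂` and `v̂`. Testing with `ŵ` gives
`(τ/2) d/dt |ŵ|² = Re ⟨ŵ, forcing⟩ - |ŵ|²`, and Young's inequality `⟨w, a⟩ ≤ |w|²/4 + |a|²`
on each of the two forcing terms absorbs half of `|ŵ|²`, with `C = 1 + (β - τ)²`.
-/

open RealInnerProductSpace

section RelaxationEnergy

variable {E : Type*} [NormedAddCommGroup E] [InnerProductSpace ℝ E]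

theorem real_inner_le_norm_sq_div_four_add_norm_sq (w a : E) :
    ⟪w, a⟫ ≤ ‖w‖ ^ 2 / 4 + ‖a‖ ^ 2 := by
  nlinarith [real_inner_le_norm w a, sq_nonneg (‖w‖ / 2 - ‖a‖)]

theorem real_inner_add_sub_self_add_half_norm_sq_le (w a b : E) :
    ⟪w, a + b - w⟫ + ‖w‖ ^ 2 / 2 ≤ ‖a‖ ^ 2 + ‖b‖ ^ 2 := by
  rw [inner_sub_right, inner_add_right, real_inner_self_eq_norm_sq]
  linarith [real_inner_le_norm_sq_div_four_add_norm_sq w a,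
    real_inner_le_norm_sq_div_four_add_norm_sq w b]

theorem deriv_norm_sq_le_of_smul_hasDerivAt_eq {f : ℝ → E} {f' a b : E} {τ t : ℝ}
    (hf : HasDerivAt f f' t) (heq : τ • f' = a + b - f t) :
    τ / 2 * deriv (fun s => ‖f s‖ ^ 2) t + ‖f t‖ ^ 2 / 2 ≤ ‖a‖ ^ 2 + ‖b‖ ^ 2 := by
  have hderiv : τ / 2 * deriv (fun s => ‖f s‖ ^ 2) t = ⟪f t, a + b - f t⟫ := by
    rw [hf.norm_sq.deriv, ← heq, inner_smul_right]
    ring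
  rw [hderiv]
  exact real_inner_add_sub_self_add_half_norm_sq_le (f t) a b

end RelaxationEnergy

theorem jmgt_w_energy_inequality_general (τ β : ℝ) :
    ∃ C > (0 : ℝ),
      ∀ (ξ : EuclideanSpace ℝ (Fin 3)) (u v w w' : ℝ → ℂ),
        (∀ t ≥ (0 : ℝ), HasDerivAt u (v t) t) →
        (∀ t ≥ (0 : ℝ), HasDerivAt v (w t) t) →
        (∀ t ≥ (0 : ℝ), HasDerivAt w (w' t) t) →
        (∀ t ≥ (0 : ℝ), (τ : ℂ) * w' t =
          -((‖ξ‖ ^ 2 : ℝ) : ℂ) * u t - ((β * ‖ξ‖ ^ 2 : ℝ) : ℂ) * v t - w t) →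
        ∀ t ≥ (0 : ℝ),
          (τ / 2) * deriv (fun s => ‖w s‖ ^ 2) t
              + (1 / 2) * ‖w t‖ ^ 2 ≤
            C * (‖ξ‖ ^ 4 * ‖u t + (τ : ℂ) * v t‖ ^ 2
              + ‖ξ‖ ^ 4 * ‖v t‖ ^ 2) := by
  refine ⟨1 + (β - τ) ^ 2, by positivity, ?_⟩
  intro ξ u v w w' _ _ hw hode t ht
  set z := u t + (τ : ℂ) * v t
  have hrelax : τ • w' t = -((‖ξ‖ ^ 2 : ℝ) : ℂ) * z
      + -(((β - τ) * ‖ξ‖ ^ 2 : ℝ) : ℂ) * v t - w t := by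
    rw [Complex.real_smul, hode t ht]
    push_cast
    ring
  have henergy := deriv_norm_sq_le_of_smul_hasDerivAt_eq (hw t ht) hrelax
  have hz : ‖-((‖ξ‖ ^ 2 : ℝ) : ℂ) * z‖ ^ 2 = ‖ξ‖ ^ 4 * ‖z‖ ^ 2 := by
    rw [norm_mul, norm_neg, Complex.norm_real, Real.norm_of_nonneg (by positivity)]
    ring
  have hv : ‖-(((β - τ) * ‖ξ‖ ^ 2 : ℝ) : ℂ) * v t‖ ^ 2
      = (β - τ) ^ 2 * (‖ξ‖ ^ 4 * ‖v t‖ ^ 2) := by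
    rw [norm_mul, norm_neg, Complex.norm_real, Real.norm_eq_abs, mul_pow, sq_abs]
    ring
  rw [hz, hv] at henergy
  nlinarith [sq_nonneg (β - τ), mul_nonneg (pow_nonneg (norm_nonneg ξ) 4) (sq_nonneg ‖z‖),
    mul_nonneg (pow_nonneg (norm_nonneg ξ) 4) (sq_nonneg ‖v t‖)]

/-- Differential inequality for `|ŵ|²` along the Fourier-mode linearized JMGT system:
`(τ/2) d/dt |ŵ(t)|² + (1/2)|ŵ(t)|² ≤ C(|ξ|⁴|û+τv̂|² + |ξ|⁴|v̂|²)`. -/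
theorem jmgt_w_energy_inequality (τ β : ℝ) (hτ : 0 < τ) (hτβ : τ < β) :
    ∃ C > (0 : ℝ),
      ∀ (ξ : EuclideanSpace ℝ (Fin 3)) (u v w w' : ℝ → ℂ),
        (∀ t ≥ (0 : ℝ), HasDerivAt u (v t) t) →
        (∀ t ≥ (0 : ℝ), HasDerivAt v (w t) t) →
        (∀ t ≥ (0 : ℝ), HasDerivAt w (w' t) t) →
        (∀ t ≥ (0 : ℝ), (τ : ℂ) * w' t =
          -((‖ξ‖ ^ 2 : ℝ) : ℂ) * u t - ((β * ‖ξ‖ ^ 2 : ℝ) : ℂ) * v t - w t) →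
        ∀ t ≥ (0 : ℝ),
          (τ / 2) * deriv (fun s => ‖w s‖ ^ 2) t
              + (1 / 2) * ‖w t‖ ^ 2 ≤
            C * (‖ξ‖ ^ 4 * ‖u t + (τ : ℂ) * v t‖ ^ 2
              + ‖ξ‖ ^ 4 * ‖v t‖ ^ 2) :=
  jmgt_w_energy_inequality_general τ β
end

section
/- Fix constants τ, β with 0 < τ < β, and suppose there exist constants C₀ > 0 and λ > 0 with τλ < 1 such that for every ξ ∈ ℝ³ and every differentiable solution (û, v̂, ŵ) : [0, ∞) → ℂ³ of the Fourier-mode linearized JMGT system one has |V̂(t)|² ≤ C₀ |V̂(0)|² exp(−λ |ξ|²/(1 + |ξ|²) · t) for all t ≥ 0, where |V̂(t)|² = |v̂(t) + τŵ(t)|² + |ξ|²|û(t) + τv̂(t)|² + |ξ|²|v̂(t)|². Then there exists a constant C > 0, depending only on τ, β, C₀, λ, such that for every ξ ∈ ℝ³ and every such solution, for all t ≥ 0: |ŵ(t)|² ≤ |ŵ(0)|² e^{−t/τ} + C |ξ|² |V̂(0)|² exp(−λ |ξ|²/(1 + |ξ|²) · t). -/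
/-!
Since `τŵ' + ŵ = -|ξ|²(û + βv̂)`, the function `φ = |ŵ|²` satisfies
`τφ' + φ ≤ |ξ|⁴|û + βv̂|²`. Splitting `û + βv̂ = (û + τv̂) + (β - τ)v̂` bounds the right-hand side
by `2(1 + (β - τ)²)|ξ|²|V̂|²`, which by hypothesis decays at a rate `λ|ξ|²/(1 + |ξ|²) ≤ λ < 1/τ`.
Comparing `φ` with the solution of the corresponding linear equation (integrating factor `e^{t/τ}`)
gives the bound, with constant `1/(1 - τλ|ξ|²/(1 + |ξ|²)) ≤ 1/(1 - τλ)`.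
-/

open Real

theorem le_mul_exp_of_mul_deriv_add_nonpos {d d' : ℝ → ℝ} {τ : ℝ} (hτ : 0 < τ)
    (hd : ∀ s ≥ 0, HasDerivAt d (d' s) s) (hineq : ∀ s ≥ 0, τ * d' s + d s ≤ 0) :
    ∀ t ≥ 0, d t ≤ d 0 * exp (-t / τ) := by
  intro t ht
  have hG : ∀ s ≥ 0, HasDerivAt (fun s => d s * exp (s / τ))
      (exp (s / τ) / τ * (τ * d' s + d s)) s := by
    intro s hs
    exact ((hd s hs).mul ((hasDerivAt_id s).div_const τ).exp).congr_deriv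
      (by simp only [id]; field_simp)
  have hanti : AntitoneOn (fun s => d s * exp (s / τ)) (Set.Ici 0) := by
    refine antitoneOn_of_hasDerivWithinAt_nonpos (convex_Ici 0)
      (fun s hs => (hG s hs).continuousAt.continuousWithinAt)
      (fun s hs => (hG s (interior_subset hs)).hasDerivWithinAt) fun s hs => ?_
    exact mul_nonpos_of_nonneg_of_nonpos (by positivity) (hineq s (interior_subset hs))
  have key : d t * exp (t / τ) ≤ d 0 := by simpa using hanti Set.self_mem_Ici ht ht
  calc d t = d t * exp (t / τ) * exp (-t / τ) := by
        rw [mul_assoc, ← exp_add, neg_div, add_neg_cancel, exp_zero, mul_one]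
    _ ≤ d 0 * exp (-t / τ) := by gcongr

theorem le_of_mul_deriv_add_le_mul_exp {φ φ' : ℝ → ℝ} {τ a A : ℝ} (hτ : 0 < τ)
    (ha : 1 + τ * a ≠ 0) (hφ : ∀ s ≥ 0, HasDerivAt φ (φ' s) s)
    (hineq : ∀ s ≥ 0, τ * φ' s + φ s ≤ A * exp (a * s)) :
    ∀ t ≥ 0, φ t ≤ φ 0 * exp (-t / τ) + A / (1 + τ * a) * (exp (a * t) - exp (-t / τ)) := by
  set B := A / (1 + τ * a)
  have hd : ∀ s ≥ 0, HasDerivAt (fun s => φ s - B * exp (a * s)) (φ' s - B * (exp (a * s) * a)) s :=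
    fun s hs => (hφ s hs).sub <|
      ((hasDerivAt_id s).const_mul a).exp.const_mul B |>.congr_deriv (by simp)
  have hd_ineq : ∀ s ≥ 0, τ * (φ' s - B * (exp (a * s) * a)) + (φ s - B * exp (a * s)) ≤ 0 :=
    fun s hs => by linear_combination hineq s hs - exp (a * s) * div_mul_cancel₀ A ha
  intro t ht
  have h := le_mul_exp_of_mul_deriv_add_nonpos hτ hd hd_ineq t ht
  simp only [mul_zero, exp_zero, mul_one] at h
  linarith

theorem mul_two_inner_add_norm_sq_le {E : Type*} [NormedAddCommGroup E] [InnerProductSpace ℝ E]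
    {τ : ℝ} {w w' f : E} (h : τ • w' = f - w) :
    τ * (2 * inner ℝ w w') + ‖w‖ ^ 2 ≤ ‖f‖ ^ 2 := by
  have hsq : 0 ≤ ‖w - f‖ ^ 2 := sq_nonneg _
  rw [norm_sub_sq_real] at hsq
  have : τ * inner ℝ w w' = inner ℝ w f - ‖w‖ ^ 2 := by
    rw [← inner_smul_right, h, inner_sub_right, real_inner_self_eq_norm_sq]
  linear_combination hsq + 2 * this

theorem sq_mul_norm_add_mul_sq_le {τ β r : ℝ} (hr : 0 ≤ r) (u v w : ℂ) :
    r ^ 2 * ‖u + β * v‖ ^ 2 ≤ 2 * (1 + (β - τ) ^ 2) * r *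
      (‖v + τ * w‖ ^ 2 + r * ‖u + τ * v‖ ^ 2 + r * ‖v‖ ^ 2) := by
  have hsplit : ‖u + β * v‖ ^ 2 ≤ 2 * ‖u + τ * v‖ ^ 2 + 2 * (β - τ) ^ 2 * ‖v‖ ^ 2 := by
    have : u + β * v = (u + τ * v) + ((β - τ : ℝ) : ℂ) * v := by push_cast; ring
    rw [this]
    calc _ ≤ (‖u + τ * v‖ + ‖((β - τ : ℝ) : ℂ) * v‖) ^ 2 := by gcongr; exact norm_add_le _ _
      _ ≤ 2 * (‖u + τ * v‖ ^ 2 + ‖((β - τ : ℝ) : ℂ) * v‖ ^ 2) := add_sq_le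
      _ = _ := by rw [norm_mul, Complex.norm_real, Real.norm_eq_abs, mul_pow, sq_abs]; ring
  have h1 : 0 ≤ r * ‖v + τ * w‖ ^ 2 := by positivity
  have h2 : 0 ≤ r ^ 2 * ‖u + τ * v‖ ^ 2 := by positivity
  have h3 : 0 ≤ r ^ 2 * ‖v‖ ^ 2 := by positivity
  nlinarith [mul_le_mul_of_nonneg_left hsplit (sq_nonneg r), sq_nonneg (β - τ)]

theorem jmgt_w_decay_general (τ β : ℝ) (hτ : 0 < τ)
    (C₀ lam : ℝ) (hC₀ : 0 < C₀) (hlam : 0 < lam) (hτlam : τ * lam < 1)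
    (hdecay : ∀ (ξ : EuclideanSpace ℝ (Fin 3)) (u v w w' : ℝ → ℂ),
      (∀ t ≥ (0 : ℝ), HasDerivAt u (v t) t) →
      (∀ t ≥ (0 : ℝ), HasDerivAt v (w t) t) →
      (∀ t ≥ (0 : ℝ), HasDerivAt w (w' t) t) →
      (∀ t ≥ (0 : ℝ), (τ : ℂ) * w' t =
        -((‖ξ‖ ^ 2 : ℝ) : ℂ) * u t - ((β * ‖ξ‖ ^ 2 : ℝ) : ℂ) * v t - w t) →
      ∀ t ≥ (0 : ℝ),
        ‖v t + (τ : ℂ) * w t‖ ^ 2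
          + ‖ξ‖ ^ 2 * ‖u t + (τ : ℂ) * v t‖ ^ 2
          + ‖ξ‖ ^ 2 * ‖v t‖ ^ 2 ≤
        C₀ * (‖v 0 + (τ : ℂ) * w 0‖ ^ 2
          + ‖ξ‖ ^ 2 * ‖u 0 + (τ : ℂ) * v 0‖ ^ 2
          + ‖ξ‖ ^ 2 * ‖v 0‖ ^ 2)
          * Real.exp (-lam * (‖ξ‖ ^ 2 / (1 + ‖ξ‖ ^ 2)) * t)) :
    ∃ C > (0 : ℝ),
      ∀ (ξ : EuclideanSpace ℝ (Fin 3)) (u v w w' : ℝ → ℂ),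
        (∀ t ≥ (0 : ℝ), HasDerivAt u (v t) t) →
        (∀ t ≥ (0 : ℝ), HasDerivAt v (w t) t) →
        (∀ t ≥ (0 : ℝ), HasDerivAt w (w' t) t) →
        (∀ t ≥ (0 : ℝ), (τ : ℂ) * w' t =
          -((‖ξ‖ ^ 2 : ℝ) : ℂ) * u t - ((β * ‖ξ‖ ^ 2 : ℝ) : ℂ) * v t - w t) →
        ∀ t ≥ (0 : ℝ),
          ‖w t‖ ^ 2 ≤
            ‖w 0‖ ^ 2 * Real.exp (-t / τ)
              + C * ‖ξ‖ ^ 2 * (‖v 0 + (τ : ℂ) * w 0‖ ^ 2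
                + ‖ξ‖ ^ 2 * ‖u 0 + (τ : ℂ) * v 0‖ ^ 2
                + ‖ξ‖ ^ 2 * ‖v 0‖ ^ 2)
                * Real.exp (-lam * (‖ξ‖ ^ 2 / (1 + ‖ξ‖ ^ 2)) * t) := by
  set M := 2 * (1 + (β - τ) ^ 2)
  have hτlam' : 0 < 1 - τ * lam := by linarith
  refine ⟨M * C₀ / (1 - τ * lam), by positivity, ?_⟩
  intro ξ u v w w' hu hv hw hode t ht
  set r := ‖ξ‖ ^ 2
  set μ := r / (1 + r)
  set E₀ := ‖v 0 + (τ : ℂ) * w 0‖ ^ 2 + r * ‖u 0 + (τ : ℂ) * v 0‖ ^ 2 + r * ‖v 0‖ ^ 2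
  have hμ : μ ≤ 1 := div_le_one_of_le₀ (by linarith) (by positivity)
  have hrate : 0 < 1 + τ * (-lam * μ) := by nlinarith [mul_le_mul_of_nonneg_left hμ hlam.le]
  have hforcing : ∀ s ≥ 0, τ * (2 * inner ℝ (w s) (w' s)) + ‖w s‖ ^ 2 ≤
      M * C₀ * r * E₀ * exp (-lam * μ * s) := fun s hs =>
    calc _ ≤ ‖-(r : ℂ) * (u s + β * v s)‖ ^ 2 :=
          mul_two_inner_add_norm_sq_le (by rw [Complex.real_smul, hode s hs]; push_cast; ring)
      _ = r ^ 2 * ‖u s + β * v s‖ ^ 2 := by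
          rw [norm_mul, norm_neg, Complex.norm_real, Real.norm_of_nonneg (by positivity), mul_pow]
      _ ≤ M * r * (‖v s + τ * w s‖ ^ 2 + r * ‖u s + τ * v s‖ ^ 2 + r * ‖v s‖ ^ 2) :=
          sq_mul_norm_add_mul_sq_le (by positivity) _ _ _
      _ ≤ M * r * (C₀ * E₀ * exp (-lam * μ * s)) := by
          gcongr; exact hdecay ξ u v w w' hu hv hw hode s hs
      _ = _ := by ring
  have hw_sq := le_of_mul_deriv_add_le_mul_exp hτ hrate.ne' (fun s hs => (hw s hs).norm_sq)
    hforcing t ht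
  have hB_le : M * C₀ * r * E₀ / (1 + τ * (-lam * μ)) ≤ M * C₀ / (1 - τ * lam) * r * E₀ := by
    rw [div_mul_eq_mul_div, div_mul_eq_mul_div, mul_assoc (M * C₀)]
    gcongr
    nlinarith [mul_le_mul_of_nonneg_left hμ hlam.le]
  set B := M * C₀ * r * E₀ / (1 + τ * (-lam * μ))
  have hB : 0 ≤ B := by positivity
  calc ‖w t‖ ^ 2 ≤ ‖w 0‖ ^ 2 * exp (-t / τ) + B * (exp (-lam * μ * t) - exp (-t / τ)) := hw_sq
    _ ≤ ‖w 0‖ ^ 2 * exp (-t / τ) + B * exp (-lam * μ * t) :=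
        add_le_add_right (mul_le_mul_of_nonneg_left (sub_le_self _ (exp_pos _).le) hB) _
    _ ≤ _ := add_le_add_right (mul_le_mul_of_nonneg_right hB_le (exp_pos _).le) _

/-- Decay of `|ŵ|²` for the Fourier-mode linearized JMGT system: assuming the energy
`|V̂(t)|² = |v̂+τŵ|² + |ξ|²|û+τv̂|² + |ξ|²|v̂|²` decays like
`C₀|V̂(0)|² exp(−λ|ξ|²/(1+|ξ|²)t)` with `τλ < 1`, there is `C > 0` such that
`|ŵ(t)|² ≤ |ŵ(0)|² e^{−t/τ} + C|ξ|²|V̂(0)|² exp(−λ|ξ|²/(1+|ξ|²)t)`. -/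
theorem jmgt_w_decay (τ β : ℝ) (hτ : 0 < τ) (hτβ : τ < β)
    (C₀ lam : ℝ) (hC₀ : 0 < C₀) (hlam : 0 < lam) (hτlam : τ * lam < 1)
    (hdecay : ∀ (ξ : EuclideanSpace ℝ (Fin 3)) (u v w w' : ℝ → ℂ),
      (∀ t ≥ (0 : ℝ), HasDerivAt u (v t) t) →
      (∀ t ≥ (0 : ℝ), HasDerivAt v (w t) t) →
      (∀ t ≥ (0 : ℝ), HasDerivAt w (w' t) t) →
      (∀ t ≥ (0 : ℝ), (τ : ℂ) * w' t =
        -((‖ξ‖ ^ 2 : ℝ) : ℂ) * u t - ((β * ‖ξ‖ ^ 2 : ℝ) : ℂ) * v t - w t) →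
      ∀ t ≥ (0 : ℝ),
        ‖v t + (τ : ℂ) * w t‖ ^ 2
          + ‖ξ‖ ^ 2 * ‖u t + (τ : ℂ) * v t‖ ^ 2
          + ‖ξ‖ ^ 2 * ‖v t‖ ^ 2 ≤
        C₀ * (‖v 0 + (τ : ℂ) * w 0‖ ^ 2
          + ‖ξ‖ ^ 2 * ‖u 0 + (τ : ℂ) * v 0‖ ^ 2
          + ‖ξ‖ ^ 2 * ‖v 0‖ ^ 2)
          * Real.exp (-lam * (‖ξ‖ ^ 2 / (1 + ‖ξ‖ ^ 2)) * t)) :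
    ∃ C > (0 : ℝ),
      ∀ (ξ : EuclideanSpace ℝ (Fin 3)) (u v w w' : ℝ → ℂ),
        (∀ t ≥ (0 : ℝ), HasDerivAt u (v t) t) →
        (∀ t ≥ (0 : ℝ), HasDerivAt v (w t) t) →
        (∀ t ≥ (0 : ℝ), HasDerivAt w (w' t) t) →
        (∀ t ≥ (0 : ℝ), (τ : ℂ) * w' t =
          -((‖ξ‖ ^ 2 : ℝ) : ℂ) * u t - ((β * ‖ξ‖ ^ 2 : ℝ) : ℂ) * v t - w t) →
        ∀ t ≥ (0 : ℝ),
          ‖w t‖ ^ 2 ≤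
            ‖w 0‖ ^ 2 * Real.exp (-t / τ)
              + C * ‖ξ‖ ^ 2 * (‖v 0 + (τ : ℂ) * w 0‖ ^ 2
                + ‖ξ‖ ^ 2 * ‖u 0 + (τ : ℂ) * v 0‖ ^ 2
                + ‖ξ‖ ^ 2 * ‖v 0‖ ^ 2)
                * Real.exp (-lam * (‖ξ‖ ^ 2 / (1 + ‖ξ‖ ^ 2)) * t) :=
  jmgt_w_decay_general τ β hτ C₀ lam hC₀ hlam hτlam hdecay
end
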